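/- Large graphs have exponentially small L² mass: let 0 < β < 1. There exists a constant C = C_β > 0, independent of N, such that for every N ∈ ℕ and every integer k ≥ 0, 𝔼[ ( Σ_{γ∈Γ_sc : |γ| ≥ k} w(γ) )² ] ≤ C exp( −k log(1/β) ). -/

import Mathlib

/-! Expanding the square, the weights of distinct graphs are orthogonal: the variables
`tanh (β g_e)` are independent and centred, so `𝔼[w(γ) w(τ)] = 0` unless `γ = τ`, while
`𝔼[w(γ)²] = q^|γ|` with `q = 𝔼 tanh²(β g) ≤ β² / N`. Hence the left side is at most
`β^k ∑_{γ ∈ Γ_sc} (β / N)^|γ|`. By the high-temperature expansion this sum equals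
`2^{-N} ∑_σ ∏_{i<j} (1 + (β / N) σ_i σ_j) ≤ 2^{-N} ∑_σ exp (β (∑_i σ_i)² / (2N))`;
linearising the square with a Gaussian (Hubbard–Stratonovich) and using
`cosh z ≤ exp (z² / 2)` bounds it by `(1 - β)^{-1/2}`. -/

open MeasureTheory ProbabilityTheory Filter Topology
open scoped NNReal ENNReal

namespace SK

/-- Edges are ordered pairs `(u, v)` with `u < v`. -/
abbrev Edge (N : ℕ) := Fin N × Fin N

variable {N : ℕ}

/-- An edge set determines a simple graph if every edge is an increasing pair. -/
def IsGraph (E : Finset (Edge N)) : Prop := ∀ e ∈ E, e.1 < e.2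

/-- Degree of a vertex: the number of edges containing it. -/
def degree (E : Finset (Edge N)) (v : Fin N) : ℕ :=
  (E.filter fun e => e.1 = v ∨ e.2 = v).card

/-- Vertex set of a graph given by an edge set (no isolated vertices). -/
def verts (E : Finset (Edge N)) : Finset (Fin N) :=
  Finset.univ.filter fun v => 0 < degree E v

/-- The simple graph associated to an edge set. -/
def toSG (E : Finset (Edge N)) : SimpleGraph (Fin N) where
  Adj u v := u ≠ v ∧ ((u, v) ∈ E ∨ (v, u) ∈ E)
  symm := ⟨fun _ _ h => ⟨h.1.symm, h.2.symm⟩⟩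
  loopless := ⟨fun _ h => h.1 rfl⟩

/-- Connectivity of the graph induced on its vertex set. -/
def GConnected (E : Finset (Edge N)) : Prop :=
  ∀ u ∈ verts E, ∀ v ∈ verts E, (toSG E).Reachable u v

/-- Simple closed graph: every vertex has even degree (member of `Γ_sc`;
the empty graph is allowed). -/
def IsClosed (E : Finset (Edge N)) : Prop :=
  IsGraph E ∧ ∀ v, Even (degree E v)

/-- Cycle (simple loop, member of `Γ_loop`): connected with all degrees equal to two. -/
def IsCycle (E : Finset (Edge N)) : Prop :=
  IsGraph E ∧ E.Nonempty ∧ GConnected E ∧ ∀ v ∈ verts E, degree E v = 2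

/-- Self-avoiding path from `i` to `j` (member of `Γ_p^{ij}`): connected, exactly the two
vertices `i ≠ j` have degree one, and all other vertices have degree two. -/
def IsPath (i j : Fin N) (E : Finset (Edge N)) : Prop :=
  IsGraph E ∧ i ≠ j ∧ GConnected E ∧ i ∈ verts E ∧ j ∈ verts E ∧
    degree E i = 1 ∧ degree E j = 1 ∧ ∀ v ∈ verts E, v ≠ i → v ≠ j → degree E v = 2

/-- The edge `{i, j}` as an ordered pair. -/
def mkEdge (i j : Fin N) : Edge N := if i < j then (i, j) else (j, i)

/-- Weight of a graph: `w(γ) = ∏_{e ∈ γ} tanh(β g_e)`, with `w(∅) = 1`. -/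
noncomputable def wt (β : ℝ) (g : Fin N → Fin N → ℝ) (E : Finset (Edge N)) : ℝ :=
  ∏ e ∈ E, Real.tanh (β * g e.1 e.2)

/-- Polynomial weight of a graph: `∏_{e ∈ γ} β g_e`. -/
noncomputable def pwt (β : ℝ) (g : Fin N → Fin N → ℝ) (E : Finset (Edge N)) : ℝ :=
  ∏ e ∈ E, β * g e.1 e.2

/-- Spin value of a Boolean configuration entry. -/
def spin (b : Bool) : ℝ := if b then 1 else -1

/-- The set of increasing pairs `i < j`. -/
def pairs (N : ℕ) : Finset (Edge N) := Finset.univ.filter fun e => e.1 < e.2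

/-- SK Hamiltonian `H_N(σ) = β ∑_{i<j} g_{ij} σ_i σ_j`. -/
noncomputable def hamil (β : ℝ) (g : Fin N → Fin N → ℝ) (σ : Fin N → ℝ) : ℝ :=
  β * ∑ e ∈ pairs N, g e.1 e.2 * σ e.1 * σ e.2

/-- Gibbs expectation `⟨f⟩`. -/
noncomputable def gibbs (β : ℝ) (g : Fin N → Fin N → ℝ) (f : (Fin N → ℝ) → ℝ) : ℝ :=
  (∑ s : Fin N → Bool, f (fun i => spin (s i)) * Real.exp (hamil β g fun i => spin (s i))) /
    ∑ s : Fin N → Bool, Real.exp (hamil β g fun i => spin (s i))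

/-- Two point correlation matrix `M = (⟨σ_i σ_j⟩)`. -/
noncomputable def Mmat (β : ℝ) (g : Fin N → Fin N → ℝ) : Matrix (Fin N) (Fin N) ℝ :=
  Matrix.of fun i j => gibbs β g fun σ => σ i * σ j

/-- Self-avoiding path matrix `P`: `p_{ii} = 1` and
`p_{ij} = ∑_{γ ∈ Γ_p^{ij}} ∏_{e ∈ γ} β g_e` for `i ≠ j`. -/
noncomputable def Pmat (β : ℝ) (g : Fin N → Fin N → ℝ) : Matrix (Fin N) (Fin N) ℝ :=
  Matrix.of fun i j =>
    if i = j then 1 else ∑ᶠ E ∈ {E : Finset (Edge N) | IsPath i j E}, pwt β g E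

/-- Frobenius (Hilbert–Schmidt) norm of a matrix. -/
noncomputable def frobNorm (A : Matrix (Fin N) (Fin N) ℝ) : ℝ :=
  Real.sqrt (∑ i, ∑ j, A i j ^ 2)

/-- Euclidean operator norm of a matrix: `sup_{‖v‖ = 1} ‖A v‖`. -/
noncomputable def opNorm (A : Matrix (Fin N) (Fin N) ℝ) : ℝ :=
  sSup {r : ℝ | ∃ v : Fin N → ℝ, ∑ i, v i ^ 2 = 1 ∧ r = Real.sqrt (∑ i, A.mulVec v i ^ 2)}

/-- The resolvent `((1 + β²)·id - βG)⁻¹`. -/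
noncomputable def resolvent (β : ℝ) (G : Matrix (Fin N) (Fin N) ℝ) : Matrix (Fin N) (Fin N) ℝ :=
  ((1 + β ^ 2) • (1 : Matrix (Fin N) (Fin N) ℝ) - β • G)⁻¹

/-- Large graph threshold `k_N = (log N)^{3/2}`. -/
noncomputable def kN (N : ℕ) : ℝ := Real.log N ^ (3 / 2 : ℝ)

/-- `E` is an edge-disjoint union of self-avoiding paths with endpoints in `W`. -/
def IsPathUnion (W : Finset (Fin N)) (E : Finset (Edge N)) : Prop :=
  ∃ (k : ℕ) (p : Fin k → Finset (Edge N)) (a b : Fin k → Fin N),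
    (∀ t, IsPath (a t) (b t) (p t)) ∧ (∀ t, a t ∈ W ∧ b t ∈ W) ∧
    (∀ s t, s ≠ t → Disjoint (p s) (p t)) ∧ E = Finset.univ.biUnion p

/-- Relabeling of a graph by a permutation of the vertices. -/
def relabel (π : Equiv.Perm (Fin N)) (E : Finset (Edge N)) : Finset (Edge N) :=
  E.image fun e => mkEdge (π e.1) (π e.2)

/-- Two graphs on the same vertex set are isomorphic if one is a relabeling of the other. -/
def Isomorphic (E E' : Finset (Edge N)) : Prop :=
  ∃ π : Equiv.Perm (Fin N), relabel π E = E'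

/-- The set `T_{η₁}^{ij}` of multiplicity-two graphs `ψ₂(γ∘τ) = γ ∩ τ` arising from pairs
`(γ, τ) ∈ S_{η₁}^{ij}`, i.e. `γ ∈ Γ_loop`, `τ ∈ Γ_sc`, `{i,j} ∈ γ`, `|V_γ ∩ V_τ| ≥ 2`,
`|γ| < c` and `ψ₁(γ∘τ) = η₁`. -/
def Tset (N : ℕ) (c : ℝ) (i j : Fin N) (η₁ : Finset (Edge N)) : Set (Finset (Edge N)) :=
  {η₂ | ∃ γ τ : Finset (Edge N), IsCycle γ ∧ IsClosed τ ∧ mkEdge i j ∈ γ ∧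
    2 ≤ (verts γ ∩ verts τ).card ∧ (γ.card : ℝ) < c ∧
    (γ ∪ τ) \ (γ ∩ τ) = η₁ ∧ γ ∩ τ = η₂}

/-- The coupling hypotheses of the SK model: `(g_{ij})_{i<j}` are independent centered
Gaussian random variables of variance `1/N`, extended symmetrically with `g_{ii} = 0`. -/
def IsSKCoupling (N : ℕ) {Ω : Type} [MeasureSpace Ω] (g : Ω → Fin N → Fin N → ℝ) : Prop :=
  IsProbabilityMeasure (ℙ : Measure Ω) ∧
    (∀ i j, Measurable fun ω => g ω i j) ∧
    (∀ ω i j, g ω j i = g ω i j) ∧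
    (∀ ω i, g ω i i = 0) ∧
    (∀ i j : Fin N, i < j →
      Measure.map (fun ω => g ω i j) ℙ = gaussianReal 0 (N : ℝ≥0)⁻¹) ∧
    iIndepFun
      (fun (e : {e : Edge N // e.1 < e.2}) ω => g ω e.1.1 e.1.2) ℙ

open Real

@[fun_prop]
theorem continuous_tanh : Continuous tanh := by
  simp_rw [funext tanh_eq_sinh_div_cosh]
  exact continuous_sinh.div continuous_cosh fun x => (cosh_pos x).ne'

theorem tanh_sq_le_sq (x : ℝ) : tanh x ^ 2 ≤ x ^ 2 := by
  have hcosh : cosh x ^ 2 ≤ exp (x ^ 2) := by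
    calc cosh x ^ 2 ≤ exp (x ^ 2 / 2) ^ 2 := by gcongr; exact cosh_le_exp_half_sq x
      _ = exp (x ^ 2) := by rw [← exp_nat_mul]; ring_nf
  have htanh : tanh x ^ 2 = 1 - (cosh x ^ 2)⁻¹ := by
    rw [tanh_eq_sinh_div_cosh, div_pow, cosh_sq]
    field_simp
    ring
  calc tanh x ^ 2 = 1 - (cosh x ^ 2)⁻¹ := htanh
    _ ≤ 1 - exp (-x ^ 2) := by
      rw [exp_neg]; gcongr
    _ ≤ x ^ 2 := by linarith [add_one_le_exp (-x ^ 2)]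

theorem integral_tanh_mul_gaussianReal_eq_zero (b : ℝ) (v : ℝ≥0) :
    ∫ x, tanh (b * x) ∂gaussianReal 0 v = 0 := by
  have hsymm : ∫ x, tanh (b * x) ∂gaussianReal 0 v = ∫ x, tanh (b * -x) ∂gaussianReal 0 v := by
    conv_lhs => rw [← neg_zero, ← gaussianReal_map_neg]
    exact integral_map (by fun_prop) (by fun_prop)
  simp only [mul_neg, tanh_neg, integral_neg] at hsymm
  linarith

theorem integral_sq_gaussianReal (v : ℝ≥0) : ∫ x, x ^ 2 ∂gaussianReal 0 v = v := by
  rw [← variance_id_gaussianReal (μ := 0),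
    variance_of_integral_eq_zero aemeasurable_id integral_id_gaussianReal]
  rfl

theorem integral_tanh_sq_mul_gaussianReal_le (b : ℝ) (v : ℝ≥0) :
    ∫ x, tanh (b * x) ^ 2 ∂gaussianReal 0 v ≤ b ^ 2 * v := by
  have hbdd : Integrable (fun x => tanh (b * x) ^ 2) (gaussianReal 0 v) := by
    refine .of_bound (by fun_prop) 1 (.of_forall fun x => ?_)
    simpa using (tanh_sq_lt_one (b * x)).le
  calc ∫ x, tanh (b * x) ^ 2 ∂gaussianReal 0 v ≤ ∫ x, b ^ 2 * x ^ 2 ∂gaussianReal 0 v :=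
        integral_mono hbdd ((memLp_id_gaussianReal 2).integrable_sq.const_mul _)
          fun x => (tanh_sq_le_sq _).trans_eq (mul_pow b x 2)
    _ = b ^ 2 * v := by rw [integral_const_mul, integral_sq_gaussianReal]

theorem integral_exp_mul_sq_gaussianReal (v : ℝ≥0) {t : ℝ} (ht : t * v < 1) :
    ∫ z, exp (t * z ^ 2 / 2) ∂gaussianReal 0 v = (√(1 - t * v))⁻¹ := by
  rcases eq_or_ne v 0 with rfl | hv
  · simp [gaussianReal_zero_var]
  have hv0 : (0 : ℝ) < v := by positivity
  have hb : 0 < (1 - t * v) / (2 * v) := by apply div_pos <;> linarith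
  have hpdf : ∀ z, gaussianPDFReal 0 v z • exp (t * z ^ 2 / 2)
      = (√(2 * π * v))⁻¹ * exp (-((1 - t * v) / (2 * v)) * z ^ 2) := by
    intro z
    rw [gaussianPDFReal, smul_eq_mul, mul_assoc, ← exp_add]
    congr 2
    field_simp
    ring
  rw [integral_gaussianReal_eq_integral_smul hv, integral_congr_ae (.of_forall hpdf),
    integral_const_mul, integral_gaussian, ← sqrt_inv, ← sqrt_inv, ← sqrt_mul (by positivity)]
  congr 1
  field_simp

theorem integral_prod_mul_prod_of_iIndepFun {Ω ι : Type*} [MeasurableSpace Ω] {μ : Measure Ω}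
    [Fintype ι] [DecidableEq ι] {Y : ι → Ω → ℝ} (hY : iIndepFun Y μ)
    (mY : ∀ i, AEMeasurable (Y i) μ) (hY0 : ∀ i, ∫ ω, Y i ω ∂μ = 0) (s t : Finset ι) :
    ∫ ω, (∏ i ∈ s, Y i ω) * ∏ i ∈ t, Y i ω ∂μ =
      if s = t then ∏ i ∈ s, ∫ ω, Y i ω ^ 2 ∂μ else 0 := by
  have := hY.isProbabilityMeasure
  set f : ι → ℝ → ℝ := fun i y => (if i ∈ s then y else 1) * (if i ∈ t then y else 1)
  have mf : ∀ i, Measurable (f i) := fun i => by simp only [f]; split_ifs <;> fun_prop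
  have hprod : ∀ ω, (∏ i ∈ s, Y i ω) * ∏ i ∈ t, Y i ω = ∏ i, f i (Y i ω) := by
    intro ω
    simp only [f, Finset.prod_mul_distrib, Finset.prod_ite_mem, Finset.univ_inter]
  simp_rw [hprod]
  rw [hY.integral_fun_prod_comp mY fun i => (mf i).aestronglyMeasurable]
  split_ifs with hst
  · subst hst
    rw [← Finset.univ_inter s, ← Finset.prod_ite_mem]
    refine Finset.prod_congr rfl fun i _ => ?_
    by_cases hi : i ∈ s <;> simp [f, hi, sq]
  · obtain ⟨i, hi⟩ : ∃ i, (i ∈ s ∧ i ∉ t) ∨ (i ∈ t ∧ i ∉ s) := by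
      by_contra! h
      exact hst (Finset.ext fun i => ⟨(h i).1, (h i).2⟩)
    refine Finset.prod_eq_zero (Finset.mem_univ i) ?_
    rcases hi with ⟨his, hit⟩ | ⟨hit, his⟩ <;> simpa [f, his, hit] using hY0 i

section Weights

variable {Ω : Type} [MeasureSpace Ω] {g : Ω → Fin N → Fin N → ℝ}

theorem wt_eq_prod_subtype (β : ℝ) (G : Fin N → Fin N → ℝ) {γ : Finset (Edge N)}
    (hγ : IsGraph γ) :
    wt β G γ = ∏ e ∈ γ.subtype (fun e : Edge N => e.1 < e.2), tanh (β * G e.1.1 e.1.2) := by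
  rw [Finset.prod_subtype_eq_prod_filter (fun e : Edge N => tanh (β * G e.1 e.2)),
    Finset.filter_true_of_mem hγ, wt]

theorem subtype_inj_of_isGraph {γ τ : Finset (Edge N)} (hγ : IsGraph γ) (hτ : IsGraph τ) :
    γ.subtype (fun e : Edge N => e.1 < e.2) = τ.subtype (fun e : Edge N => e.1 < e.2) ↔
      γ = τ := by
  refine ⟨fun h => ?_, fun h => h ▸ rfl⟩
  rw [← Finset.filter_true_of_mem hγ, ← Finset.filter_true_of_mem hτ, ← Finset.subtype_map,
    ← Finset.subtype_map, h]

theorem abs_wt_le_one (β : ℝ) (G : Fin N → Fin N → ℝ) (γ : Finset (Edge N)) :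
    |wt β G γ| ≤ 1 := by
  rw [wt, Finset.abs_prod]
  exact Finset.prod_le_one (fun _ _ => abs_nonneg _) fun _ _ => (abs_tanh_lt_one _).le

theorem integral_wt_mul_wt (hg : IsSKCoupling N g) (β : ℝ) {γ τ : Finset (Edge N)}
    (hγ : IsGraph γ) (hτ : IsGraph τ) :
    ∫ ω, wt β (g ω) γ * wt β (g ω) τ =
      if γ = τ then (∫ x, tanh (β * x) ^ 2 ∂gaussianReal 0 (N : ℝ≥0)⁻¹) ^ γ.card else 0 := by
  obtain ⟨-, hmeas, -, -, hlaw, hindep⟩ := hg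
  have hlaw' : ∀ (e : {e : Edge N // e.1 < e.2}) (f : ℝ → ℝ), Continuous f →
      ∫ ω, f (g ω e.1.1 e.1.2) = ∫ x, f x ∂gaussianReal 0 (N : ℝ≥0)⁻¹ := by
    intro e f hf
    rw [← hlaw _ _ e.2, integral_map (hmeas _ _).aemeasurable hf.aestronglyMeasurable]
  have hY : iIndepFun (fun (e : {e : Edge N // e.1 < e.2}) ω => tanh (β * g ω e.1.1 e.1.2)) ℙ :=
    hindep.comp (fun _ x => tanh (β * x)) fun _ => by fun_prop
  simp_rw [wt_eq_prod_subtype β _ hγ, wt_eq_prod_subtype β _ hτ]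
  rw [integral_prod_mul_prod_of_iIndepFun hY (fun e => by fun_prop)
    (fun e => (hlaw' e _ (by fun_prop)).trans (integral_tanh_mul_gaussianReal_eq_zero β _))]
  simp only [subtype_inj_of_isGraph hγ hτ]
  split_ifs
  · rw [Finset.prod_congr rfl fun e _ => hlaw' e (fun x => tanh (β * x) ^ 2) (by fun_prop),
      Finset.prod_const, Finset.card_subtype, Finset.filter_true_of_mem hγ]
  · rfl

theorem integral_sq_sum_wt (hg : IsSKCoupling N g) (β : ℝ) (S : Finset (Finset (Edge N)))
    (hS : ∀ γ ∈ S, IsGraph γ) :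
    ∫ ω, (∑ γ ∈ S, wt β (g ω) γ) ^ 2 =
      ∑ γ ∈ S, (∫ x, tanh (β * x) ^ 2 ∂gaussianReal 0 (N : ℝ≥0)⁻¹) ^ γ.card := by
  have := hg.1
  have hmeas := hg.2.1
  have hint : ∀ γ τ, Integrable fun ω => wt β (g ω) γ * wt β (g ω) τ := fun γ τ =>
    .of_bound (by unfold wt; fun_prop) 1 (.of_forall fun ω => by
      rw [norm_mul]; exact mul_le_one₀ (abs_wt_le_one ..) (norm_nonneg _) (abs_wt_le_one ..))
  conv_lhs => simp only [sq, Finset.sum_mul_sum]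
  rw [integral_finsetSum _ fun γ _ => integrable_finsetSum _ fun τ _ => hint γ τ]
  refine Finset.sum_congr rfl fun γ hγ => ?_
  rw [integral_finsetSum _ fun τ _ => hint γ τ,
    Finset.sum_congr rfl fun τ hτ => integral_wt_mul_wt hg β (hS γ hγ) (hS τ hτ),
    Finset.sum_ite_eq, if_pos hγ]

end Weights

def closedGraphs (N : ℕ) : Finset (Finset (Edge N)) :=
  (pairs N).powerset.filter fun γ => ∀ v, Even (degree γ v)

theorem isGraph_iff_subset_pairs {γ : Finset (Edge N)} : IsGraph γ ↔ γ ⊆ pairs N := by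
  simp [IsGraph, Finset.subset_iff, pairs]

theorem mem_closedGraphs {γ : Finset (Edge N)} : γ ∈ closedGraphs N ↔ IsClosed γ := by
  simp [closedGraphs, IsClosed, isGraph_iff_subset_pairs]

theorem sum_spin_pow (d : ℕ) : ∑ b : Bool, spin b ^ d = if Even d then 2 else 0 := by
  rcases Nat.even_or_odd d with h | h
  · simp [spin, h.neg_one_pow, h]
  · simp [spin, h.neg_one_pow, Nat.not_even_iff_odd.mpr h]

theorem sum_prod_spin_pow (d : Fin N → ℕ) :
    ∑ s : Fin N → Bool, ∏ v, spin (s v) ^ d v = if ∀ v, Even (d v) then 2 ^ N else 0 := by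
  rw [← Fintype.prod_sum fun v b => spin b ^ d v]
  simp_rw [sum_spin_pow]
  split_ifs with h
  · simp [h]
  · obtain ⟨v, hv⟩ := not_forall.mp h
    exact Finset.prod_eq_zero (Finset.mem_univ v) (if_neg hv)

theorem prod_mul_eq_prod_pow_degree {M : Type*} [CommMonoid M] {γ : Finset (Edge N)}
    (hγ : IsGraph γ) (σ : Fin N → M) :
    ∏ e ∈ γ, σ e.1 * σ e.2 = ∏ v, σ v ^ degree γ v := by
  have hedge : ∀ e ∈ γ, σ e.1 * σ e.2 = ∏ v, if e.1 = v ∨ e.2 = v then σ v else 1 := by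
    intro e he
    have hne := (hγ e he).ne
    rw [← Fintype.prod_ite_eq e.1 σ, ← Fintype.prod_ite_eq e.2 σ, ← Finset.prod_mul_distrib]
    refine Finset.prod_congr rfl fun v _ => ?_
    by_cases h1 : e.1 = v <;> by_cases h2 : e.2 = v <;> simp_all
  rw [Finset.prod_congr rfl hedge, Finset.prod_comm]
  refine Finset.prod_congr rfl fun v _ => ?_
  rw [degree, ← Finset.prod_const, Finset.prod_filter]

theorem sum_prod_one_add_mul_spin (x : ℝ) :
    ∑ s : Fin N → Bool, ∏ e ∈ pairs N, (1 + x * (spin (s e.1) * spin (s e.2))) =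
      2 ^ N * ∑ γ ∈ closedGraphs N, x ^ γ.card := by
  have hexpand : ∀ s : Fin N → Bool,
      ∏ e ∈ pairs N, (1 + x * (spin (s e.1) * spin (s e.2))) =
        ∑ γ ∈ (pairs N).powerset, x ^ γ.card * ∏ v, spin (s v) ^ degree γ v := by
    intro s
    rw [Finset.prod_one_add]
    refine Finset.sum_congr rfl fun γ hγ => ?_
    rw [Finset.prod_mul_distrib, Finset.prod_const, prod_mul_eq_prod_pow_degree
      (isGraph_iff_subset_pairs.mpr (Finset.mem_powerset.mp hγ)) fun v => spin (s v)]
  simp_rw [hexpand]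
  rw [Finset.sum_comm, closedGraphs, Finset.sum_filter, Finset.mul_sum]
  refine Finset.sum_congr rfl fun γ _ => ?_
  rw [← Finset.mul_sum, sum_prod_spin_pow]
  split_ifs <;> ring

theorem sq_sum_eq_two_mul_sum_pairs_add_sum_sq (σ : Fin N → ℝ) :
    (∑ v, σ v) ^ 2 = 2 * ∑ e ∈ pairs N, σ e.1 * σ e.2 + ∑ v, σ v ^ 2 := by
  have hsplit : ∀ e : Edge N, σ e.1 * σ e.2 = (if e.1 < e.2 then σ e.1 * σ e.2 else 0) +
      (if e.2 < e.1 then σ e.2 * σ e.1 else 0) + (if e.1 = e.2 then σ e.1 * σ e.2 else 0) := by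
    intro e
    rcases lt_trichotomy e.1 e.2 with h | h | h
    · simp [h, h.not_gt, h.ne]
    · simp [h]
    · simp [h, h.not_gt, h.ne', mul_comm]
  have hdiag : ∑ e : Edge N, (if e.1 = e.2 then σ e.1 * σ e.2 else 0) = ∑ v, σ v ^ 2 := by
    simp [Fintype.sum_prod_type, sq]
  rw [sq, Finset.sum_mul_sum, ← Fintype.sum_prod_type', Fintype.sum_congr _ _ hsplit,
    Finset.sum_add_distrib, Finset.sum_add_distrib,
    Fintype.sum_equiv (Equiv.prodComm _ _) (fun e => if e.2 < e.1 then σ e.2 * σ e.1 else 0)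
      (fun e => if e.1 < e.2 then σ e.1 * σ e.2 else 0) fun _ => rfl, hdiag, pairs,
    Finset.sum_filter]
  ring

theorem prod_one_add_mul_spin_le_exp {x : ℝ} (hx : 0 ≤ x) (hxN : x * N ≤ 1) (s : Fin N → Bool) :
    ∏ e ∈ pairs N, (1 + x * (spin (s e.1) * spin (s e.2))) ≤
      exp (x * (∑ v, spin (s v)) ^ 2 / 2) := by
  calc ∏ e ∈ pairs N, (1 + x * (spin (s e.1) * spin (s e.2)))
      ≤ ∏ e ∈ pairs N, exp (x * (spin (s e.1) * spin (s e.2))) := by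
        refine Finset.prod_le_prod (fun e _ => ?_) fun e _ => by
          linarith [add_one_le_exp (x * (spin (s e.1) * spin (s e.2)))]
        -- an edge forces `1 ≤ N`, hence `x ≤ 1` and the factor is nonnegative
        have hN : (1 : ℝ) ≤ N := by exact_mod_cast e.1.pos
        have hspin : -1 ≤ spin (s e.1) * spin (s e.2) := by
          cases s e.1 <;> cases s e.2 <;> norm_num [spin]
        nlinarith
    _ = exp (x * ∑ e ∈ pairs N, spin (s e.1) * spin (s e.2)) := by rw [← exp_sum, Finset.mul_sum]
    _ ≤ exp (x * (∑ v, spin (s v)) ^ 2 / 2) := by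
        gcongr
        have := Finset.sum_nonneg fun v (_ : v ∈ Finset.univ) => sq_nonneg (spin (s v))
        rw [sq_sum_eq_two_mul_sum_pairs_add_sum_sq]
        nlinarith

theorem sum_exp_sum_spin_mul (z : ℝ) :
    ∑ s : Fin N → Bool, exp ((∑ v, spin (s v)) * z) = (2 * cosh z) ^ N := by
  simp_rw [Finset.sum_mul, exp_sum]
  rw [← Fintype.prod_sum fun _ b => exp (spin b * z)]
  simp [spin, cosh_eq]
  ring

theorem sum_closedGraphs_pow_le {x : ℝ} (hx : 0 ≤ x) (hxN : x * N < 1) :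
    ∑ γ ∈ closedGraphs N, x ^ γ.card ≤ (√(1 - x * N))⁻¹ := by
  obtain ⟨x, rfl⟩ : ∃ v : ℝ≥0, (v : ℝ) = x := ⟨⟨x, hx⟩, rfl⟩
  have hHS : ∀ a : ℝ, exp (x * a ^ 2 / 2) = ∫ z, exp (a * z) ∂gaussianReal 0 x := fun a => by
    simpa [mgf] using (congrFun (mgf_fun_id_gaussianReal (μ := 0) (v := x)) a).symm
  have hcosh : ∀ z, (2 * cosh z) ^ N ≤ 2 ^ N * exp (N * z ^ 2 / 2) := fun z => by
    rw [mul_pow, mul_div_assoc, exp_nat_mul]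
    gcongr
    exact cosh_le_exp_half_sq z
  have hgauss : ∫ z, exp (N * z ^ 2 / 2) ∂gaussianReal 0 x = (√(1 - x * N))⁻¹ := by
    rw [integral_exp_mul_sq_gaussianReal _ (by simpa [mul_comm] using hxN)]
    simp [mul_comm]
  have key : 2 ^ N * ∑ γ ∈ closedGraphs N, (x : ℝ) ^ γ.card ≤ 2 ^ N * (√(1 - x * N))⁻¹ :=
    calc 2 ^ N * ∑ γ ∈ closedGraphs N, (x : ℝ) ^ γ.card
        = ∑ s : Fin N → Bool, ∏ e ∈ pairs N, (1 + x * (spin (s e.1) * spin (s e.2))) :=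
          (sum_prod_one_add_mul_spin x).symm
      _ ≤ ∑ s : Fin N → Bool, exp (x * (∑ v, spin (s v)) ^ 2 / 2) :=
          Finset.sum_le_sum fun s _ => prod_one_add_mul_spin_le_exp x.2 hxN.le s
      _ = ∫ z, ∑ s : Fin N → Bool, exp ((∑ v, spin (s v)) * z) ∂gaussianReal 0 x := by
          rw [integral_finsetSum _ fun s _ => integrable_exp_mul_gaussianReal _]
          simp_rw [hHS]
      _ = ∫ z, (2 * cosh z) ^ N ∂gaussianReal 0 x := by simp_rw [sum_exp_sum_spin_mul]
      _ ≤ ∫ z, 2 ^ N * exp (N * z ^ 2 / 2) ∂gaussianReal 0 x := by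
          refine integral_mono_of_nonneg (.of_forall fun z => by positivity)
            (.of_integral_ne_zero ?_) (.of_forall hcosh)
          rw [integral_const_mul, hgauss]
          positivity
      _ = 2 ^ N * (√(1 - x * N))⁻¹ := by rw [integral_const_mul, hgauss]
  exact le_of_mul_le_mul_left key (by positivity)

theorem sum_large_closedGraphs_pow_le {β q : ℝ} (hβ0 : 0 ≤ β) (hβ1 : β < 1) (hq0 : 0 ≤ q)
    (hq : q ≤ β * (β / N)) (k : ℕ) :
    ∑ γ ∈ (closedGraphs N).filter (k ≤ ·.card), q ^ γ.card ≤ β ^ k * (√(1 - β))⁻¹ := by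
  have hβN : β / N * N ≤ β := by
    rcases N.eq_zero_or_pos with rfl | hN
    · simp [hβ0]
    · rw [div_mul_cancel₀ _ (by positivity)]
  calc ∑ γ ∈ (closedGraphs N).filter (k ≤ ·.card), q ^ γ.card
      ≤ ∑ γ ∈ (closedGraphs N).filter (k ≤ ·.card), β ^ k * (β / N) ^ γ.card := by
        refine Finset.sum_le_sum fun γ hγ => ?_
        calc q ^ γ.card ≤ (β * (β / N)) ^ γ.card := by gcongr
          _ ≤ β ^ k * (β / N) ^ γ.card := by
            rw [mul_pow]
            exact mul_le_mul_of_nonneg_right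
              (pow_le_pow_of_le_one hβ0 hβ1.le (Finset.mem_filter.mp hγ).2) (by positivity)
    _ ≤ β ^ k * ∑ γ ∈ closedGraphs N, (β / N) ^ γ.card := by
        rw [← Finset.mul_sum]
        gcongr
        exact Finset.filter_subset _ _
    _ ≤ β ^ k * (√(1 - β))⁻¹ := by
        gcongr
        refine (sum_closedGraphs_pow_le (by positivity) (by linarith)).trans ?_
        have : 0 < 1 - β := by linarith
        gcongr

/-- for `0 < β < 1`, large graphs have exponentially small `L²` mass:
there is `C = C_β > 0`, independent of `N`, with
`𝔼[(∑_{γ ∈ Γ_sc, |γ| ≥ k} w(γ))²] ≤ C exp(-k log(1/β))` for all `N` and `k ≥ 0`. -/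
theorem large_graphs_small_L2
    (β : ℝ) (hβ0 : 0 < β) (hβ1 : β < 1)
    (Ω : ℕ → Type) [∀ N, MeasureSpace (Ω N)]
    (g : ∀ N, Ω N → Fin N → Fin N → ℝ)
    (hg : ∀ N, IsSKCoupling N (g N)) :
    ∃ C : ℝ, 0 < C ∧ ∀ (N : ℕ) (k : ℕ),
      (∫ ω, (∑ᶠ E ∈ {E : Finset (Edge N) | IsClosed E ∧ k ≤ E.card},
          wt β (g N ω) E) ^ 2 ∂ℙ)
        ≤ C * Real.exp (-(k : ℝ) * Real.log (1 / β)) := by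
  have h1β : 0 < 1 - β := by linarith
  refine ⟨(√(1 - β))⁻¹, by positivity, fun N k => ?_⟩
  have hS : {E : Finset (Edge N) | IsClosed E ∧ k ≤ E.card} =
      ↑((closedGraphs N).filter (k ≤ ·.card)) := by
    ext E; simp [mem_closedGraphs]
  have hq : ∫ x, tanh (β * x) ^ 2 ∂gaussianReal 0 (N : ℝ≥0)⁻¹ ≤ β * (β / N) := by
    simpa [sq, mul_assoc, div_eq_mul_inv] using
      integral_tanh_sq_mul_gaussianReal_le β (N : ℝ≥0)⁻¹
  have hrhs : exp (-(k : ℝ) * log (1 / β)) = β ^ k := by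
    rw [one_div, log_inv, neg_mul_neg, exp_nat_mul, exp_log hβ0]
  simp only [hS, finsum_mem_coe_finset]
  rw [integral_sq_sum_wt (hg N) β _
    fun γ hγ => (mem_closedGraphs.mp (Finset.mem_filter.mp hγ).1).1, hrhs, mul_comm]
  exact sum_large_closedGraphs_pow_le hβ0.le hβ1 (by positivity) hq k

end SK
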